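/- Let t ∈ {0,1}ⁿ be primitive and begin with the digit 1. If ι(t) is not a cyclic shift of t, set μᵢ = F^{i−1}(t) for 1 ≤ i ≤ n; if ι(t) is a cyclic shift of t, set μᵢ = F̃^{i−1}(t^−). Then μ₁,…,μₙ are pairwise distinct, and letting rᵢ denote the lexicographic rank of μᵢ among μ₁,…,μₙ, the permutation σ of {1,…,n} defined by σ(rᵢ) = r_{i+1} (indices mod n) is a cyclic unimodal permutation. -/

import Mathlib

open Finset

namespace Necklaces

variable {n : ℕ}

/-- The cyclic left shift `L` on binary strings of length `n`. -/
def shiftL (s : Fin n → Bool) : Fin n → Bool :=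
  fun i => s ⟨(i.val + 1) % n, Nat.mod_lt _ (Nat.lt_of_le_of_lt (Nat.zero_le _) i.isLt)⟩

/-- Digitwise inversion (complement) `ι`. -/
def inv (s : Fin n → Bool) : Fin n → Bool := fun i => !(s i)

/-- A string is primitive if no nontrivial cyclic shift fixes it. -/
def Primitive (s : Fin n → Bool) : Prop :=
  ∀ k : ℕ, 0 < k → k < n → shiftL^[k] s ≠ s

/-- The necklace `⟨s⟩`: the orbit of `s` under cyclic shifts. -/
def necklace (s : Fin n → Bool) : Set (Fin n → Bool) :=
  {t | ∃ k : ℕ, t = shiftL^[k] s}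

/-- The necklace inversion class `[s]`: the orbit of `s` under cyclic shifts and inversion. -/
def invClass (s : Fin n → Bool) : Set (Fin n → Bool) :=
  {t | ∃ k : ℕ, t = shiftL^[k] s ∨ t = inv (shiftL^[k] s)}

/-- The number of 1's in `s`. -/
def onesCard (s : Fin n → Bool) : ℕ := (univ.filter (fun i => s i = true)).card

/-- The mod-2 partial sum map `Ξ`: the `i`-th digit of `Ξ(s)` is `s₁+⋯+sᵢ (mod 2)`. -/
def xi (s : Fin n → Bool) : Fin n → Bool :=
  fun i => decide (Odd ((Finset.Iic i).filter (fun j => s j = true)).card)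

/-- `ι(s)` is a cyclic shift of `s`. -/
def ReflexiveStr (s : Fin n → Bool) : Prop := ∃ k : ℕ, shiftL^[k] s = inv s

/-- `s` consists of two copies of a primitive string of length `n/2`
with an odd number of 1's. -/
def TwoCopies (s : Fin n → Bool) : Prop :=
  n % 2 = 0 ∧ shiftL^[n / 2] s = s ∧ (∀ k : ℕ, 0 < k → k < n / 2 → shiftL^[k] s ≠ s) ∧
    Odd ((univ.filter (fun i : Fin n => i.val < n / 2 ∧ s i = true)).card)

/-- `s` generates a necklace belonging to `Ñ⁺(n)`. -/
def GoodPlus (s : Fin n → Bool) : Prop :=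
  (Primitive s ∧ Even (onesCard s)) ∨ TwoCopies s

/-- The set `Ñ⁺(n)` of necklaces. -/
def NtildePlus (n : ℕ) : Set (Set (Fin n → Bool)) :=
  {N | ∃ s : Fin n → Bool, GoodPlus s ∧ N = necklace s}

/-- The set `N̄(n)` of necklace inversion classes of primitive strings. -/
def Nbar (n : ℕ) : Set (Set (Fin n → Bool)) :=
  {C | ∃ s : Fin n → Bool, Primitive s ∧ C = invClass s}

/-- Lexicographic order on strings, with `0 < 1` and the leftmost digit most significant. -/
def strLt (s t : Fin n → Bool) : Prop :=
  ∃ i : Fin n, (∀ j : Fin n, j < i → s j = t j) ∧ s i < t i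

/-- Extended lexicographic order on extended strings `s^b`
(`b = false` encodes `−`, `b = true` encodes `+`). -/
def extLt (p q : (Fin n → Bool) × Bool) : Prop :=
  strLt p.1 q.1 ∨ (p.1 = q.1 ∧ p.2 < q.2)

/-- The twisted shift operator `F`. -/
def twistF (s : Fin n → Bool) : Fin n → Bool :=
  if h : 0 < n then
    (if shiftL s ⟨0, h⟩ = true then shiftL s else inv (shiftL s))
  else s

/-- The extended twisted shift operator `F̃`. -/
def extF (p : (Fin n → Bool) × Bool) : (Fin n → Bool) × Bool :=
  if h : 0 < n then
    (if twistF p.1 ⟨n - 1, Nat.sub_lt h Nat.one_pos⟩ = true then (twistF p.1, p.2)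
     else (twistF p.1, !p.2))
  else p

/-- Cyclic successor on `Fin n`. -/
def finSucc (i : Fin n) : Fin n :=
  ⟨(i.val + 1) % n, Nat.mod_lt _ (Nat.lt_of_le_of_lt (Nat.zero_le _) i.isLt)⟩

open scoped Classical in
/-- The (0-based) lexicographic rank of `μ i` among `μ₁,…,μₙ`:
the number of indices `j` with `μ j` strictly smaller than `μ i`. -/
noncomputable def rankOf {X : Type*} (lt : X → X → Prop) (μ : Fin n → X) (i : Fin n) : ℕ :=
  (univ.filter (fun j => lt (μ j) (μ i))).card

/-- `σ` is the cyclic permutation `(r₁ r₂ ⋯ rₙ)` built from the ranks `rᵢ` of `μᵢ`: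
`σ(rᵢ) = r_{i+1}` (indices mod `n`). -/
def BuiltFrom {X : Type*} (lt : X → X → Prop) (μ : Fin n → X) (σ : Equiv.Perm (Fin n)) : Prop :=
  ∀ i j : Fin n, rankOf lt μ i = j.val → (σ j).val = rankOf lt μ (finSucc i)

/-- `σ` consists of a single `n`-cycle. -/
def IsCyclicPerm (σ : Equiv.Perm (Fin n)) : Prop :=
  ∀ x y : Fin n, ∃ k : ℕ, (σ ^ k) x = y

/-- `σ` is unimodal: decreasing on an initial segment, then increasing. -/
def IsUnimodal (σ : Equiv.Perm (Fin n)) : Prop :=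
  ∃ m : Fin n, (∀ i j : Fin n, i ≤ j → j ≤ m → σ j ≤ σ i) ∧
    (∀ i j : Fin n, m ≤ i → i ≤ j → σ i ≤ σ j)

/-- Cyclic unimodal permutations. -/
def CUPperm (σ : Equiv.Perm (Fin n)) : Prop := IsCyclicPerm σ ∧ IsUnimodal σ

/-- The string `A(σ)` obtained from the itinerary of `σ` (`+ ↦ 0`, `− ↦ 1`),
with the last digit chosen so that the total number of 1's is even.
(Here `m = σ⁻¹ 0` is the unique element with `σ m` least.) -/
def Astr [NeZero n] (σ : Equiv.Perm (Fin n)) : Fin n → Bool :=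
  fun i =>
    if i.val + 1 < n then decide ((σ ^ (i.val + 1)) (σ⁻¹ 0) < σ⁻¹ 0)
    else decide (Odd ((univ.filter (fun j : Fin n =>
      j.val + 1 < n ∧ (σ ^ (j.val + 1)) (σ⁻¹ 0) < σ⁻¹ 0)).card))

/-- The string used for `Ψ(σ)`: itinerary digits with the last digit chosen
so that the total number of 1's is odd. -/
def BstrOdd [NeZero n] (σ : Equiv.Perm (Fin n)) : Fin n → Bool :=
  fun i =>
    if i.val + 1 < n then decide ((σ ^ (i.val + 1)) (σ⁻¹ 0) < σ⁻¹ 0)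
    else !(decide (Odd ((univ.filter (fun j : Fin n =>
      j.val + 1 < n ∧ (σ ^ (j.val + 1)) (σ⁻¹ 0) < σ⁻¹ 0)).card)))

/-- The itinerary of a cyclic unimodal permutation: `none` encodes `⋆` (position `n`),
`some true` encodes `−` (i.e. `σⁱ(m) < m`), `some false` encodes `+` (i.e. `σⁱ(m) > m`). -/
def itin [NeZero n] (σ : Equiv.Perm (Fin n)) : Fin n → Option Bool :=
  fun i =>
    if i.val + 1 = n then none
    else some (decide ((σ ^ (i.val + 1)) (σ⁻¹ 0) < σ⁻¹ 0))

/-- `σ` arises from the class `C` by the construction defining `λ`: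
for some representative `t` of `C` beginning with `1`, `σ` is the cyclic permutation
built from the lexicographic ranks of the iterates of `t` under `F` (non-reflexive case)
or of `t^−` under `F̃` (reflexive case). -/
def LamRel [NeZero n] (C : Set (Fin n → Bool)) (σ : Equiv.Perm (Fin n)) : Prop :=
  ∃ t : Fin n → Bool, t 0 = true ∧ C = invClass t ∧
    ((¬ ReflexiveStr t ∧ BuiltFrom strLt (fun i : Fin n => twistF^[i.val] t) σ) ∨
     (ReflexiveStr t ∧ BuiltFrom extLt (fun i : Fin n => extF^[i.val] (t, false)) σ))

/-- `σ` arises from the representative `s` by the Weiss–Rogers construction `Φ`: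
`σ` is the cyclic permutation built from the lexicographic ranks of
`νᵢ = ι(Ξ(L^{i-1}(s)))`. -/
def PhiBuilt (s : Fin n → Bool) (σ : Equiv.Perm (Fin n)) : Prop :=
  BuiltFrom strLt (fun i : Fin n => inv (xi (shiftL^[i.val] s))) σ

end Necklaces

/-!
Every iterate `F^k(t)` begins with `1` and is `L^k(t)` or `ι(L^k(t))`. Reading `s^−` as `s` and
`s^+` as `ι(s)` (`untwist`) conjugates `F̃` to `L` on strings beginning with `1`, so the extended
orbit of `t^−` is in bijection with the shifts of `t`. Hence a coincidence among the `μᵢ` would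
give `t` a proper period or, in the non-reflexive case, make `ι(t)` a shift of `t`.

Among strings beginning with `1`, those beginning with `11` lie above those beginning with `10`.
`F` acts as `L` on the former and as `ι ∘ L` on the latter, so it is strictly increasing on the
first block and strictly decreasing on the second; the same holds for `F̃` in the extended order.
The rank map conjugates `σ` to the cyclic successor of indices, so `σ` is an `n`-cycle, increasing
on the ranks of the upper block and decreasing on those of the lower one, hence unimodal with its
minimum at `σ⁻¹(0)`.
-/

namespace Necklaces

variable {n : ℕ}

open Function

theorem inv_involutive : Involutive (inv (n := n)) := fun s => funext fun i => Bool.not_not (s i)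

theorem shiftL_inv (s : Fin n → Bool) : shiftL (inv s) = inv (shiftL s) := rfl

theorem shiftL_iterate_inv (s : Fin n → Bool) (k : ℕ) :
    shiftL^[k] (inv s) = inv (shiftL^[k] s) :=
  (Semiconj.iterate_right (f := inv) (fun s => (shiftL_inv s).symm) k s).symm

theorem toLex_inv_lt_inv {u v : Fin n → Bool} (h : toLex u < toLex v) :
    toLex (inv v) < toLex (inv u) := by
  obtain ⟨i, hagree, hlt⟩ : strLt u v := h
  refine ⟨i, fun j hj => congrArg (!·) (hagree j hj).symm, ?_⟩
  show (!v i) < (!u i)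
  revert hlt; cases u i <;> cases v i <;> decide

def extToLex (p : (Fin n → Bool) × Bool) : Lex (Lex (Fin n → Bool) × Bool) :=
  toLex (toLex p.1, p.2)

theorem extLt_eq : extLt (n := n) = fun p q => extToLex p < extToLex q := by
  ext p q
  exact (Prod.Lex.toLex_lt_toLex (x := (toLex p.1, p.2)) (y := (toLex q.1, q.2))).symm

section Shift

variable [NeZero n]

open Fin.NatCast

theorem finSucc_eq_add_one (i : Fin n) : finSucc i = i + 1 := by
  ext; simp [finSucc, Fin.val_add]

theorem shiftL_apply (s : Fin n → Bool) (i : Fin n) : shiftL s i = s (i + 1) :=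
  congrArg s (finSucc_eq_add_one i)

theorem shiftL_iterate_apply (s : Fin n → Bool) (k : ℕ) (i : Fin n) :
    (shiftL^[k] s) i = s (i + (k : Fin n)) := by
  induction k generalizing s with
  | zero => simp
  | succ k ih => rw [iterate_succ_apply, ih, shiftL_apply, Nat.cast_succ, add_assoc]

theorem shiftL_iterate_card (s : Fin n → Bool) : shiftL^[n] s = s := by
  funext i; simp [shiftL_iterate_apply]

theorem Primitive.injective_shiftL_iterate {t : Fin n → Bool} (hprim : Primitive t) :
    Injective (fun i : Fin n => shiftL^[i.val] t) := by
  intro a b h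
  by_contra hne
  wlog hab : a < b generalizing a b
  · exact this h.symm (Ne.symm hne) (lt_of_le_of_ne (not_lt.1 hab) (Ne.symm hne))
  have hb : b.val ≤ n := b.isLt.le
  apply hprim (n - b + a) (by omega) (by omega)
  calc shiftL^[n - b + a] t = shiftL^[n - b] (shiftL^[b] t) := by
        rw [iterate_add_apply]; exact congrArg _ h
    _ = t := by rw [← iterate_add_apply, Nat.sub_add_cancel hb, shiftL_iterate_card]

theorem reflexiveStr_of_shiftL_iterate_eq_inv {t : Fin n → Bool} {a b : ℕ} (hb : b ≤ n)
    (h : shiftL^[a] t = inv (shiftL^[b] t)) : ReflexiveStr t := by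
  refine ⟨n - b + a, ?_⟩
  rw [iterate_add_apply, h, ← shiftL_iterate_inv, ← iterate_add_apply, Nat.sub_add_cancel hb,
    shiftL_iterate_card]

theorem head_le_head {u v : Fin n → Bool} (h : toLex u ≤ toLex v) : u 0 ≤ v 0 :=
  Pi.apply_le_of_toLex h fun j hj => absurd hj (Fin.not_lt_zero j)

theorem head_eq_true_of_le {u v : Fin n → Bool} (hu : u 0 = true) (h : toLex u ≤ toLex v) :
    v 0 = true :=
  top_le_iff.1 (show true ≤ v 0 from hu ▸ head_le_head h)

theorem toLex_shiftL_lt_shiftL {u v : Fin n → Bool} (h0 : u 0 = v 0)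
    (h : toLex u < toLex v) : toLex (shiftL u) < toLex (shiftL v) := by
  obtain ⟨i, hagree, hlt⟩ : strLt u v := h
  have hi : i ≠ 0 := by rintro rfl; exact hlt.ne h0
  show strLt (shiftL u) (shiftL v)
  refine ⟨i - 1, fun j hj => ?_, ?_⟩
  · have hj' : j.val + 1 < i.val := by
      have := Fin.val_sub_one_of_ne_zero hi
      rw [Fin.lt_def] at hj; omega
    rw [shiftL_apply, shiftL_apply]
    exact hagree _ (by rw [Fin.lt_def, Fin.val_add_one_of_lt' (by omega)]; exact hj')
  · simpa [shiftL_apply] using hlt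

theorem shiftL_last (s : Fin n → Bool) :
    shiftL s ⟨n - 1, Nat.sub_lt (NeZero.pos n) Nat.one_pos⟩ = s 0 := by
  simp [shiftL, Nat.sub_add_cancel (NeZero.pos n)]

end Shift

section TwistedShift

variable [NeZero n]

theorem twistF_eq (s : Fin n → Bool) :
    twistF s = if shiftL s 0 = true then shiftL s else inv (shiftL s) := by
  simp only [twistF, dif_pos (NeZero.pos n)]; rfl

theorem twistF_of_shiftL_head {s : Fin n → Bool} (h : shiftL s 0 = true) :
    twistF s = shiftL s := by
  rw [twistF_eq, if_pos h]

theorem twistF_of_shiftL_head_false {s : Fin n → Bool} (h : shiftL s 0 = false) :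
    twistF s = inv (shiftL s) := by
  rw [twistF_eq, if_neg (by simp [h])]

theorem twistF_head (s : Fin n → Bool) : twistF s 0 = true := by
  rw [twistF_eq]; split <;> simp_all [inv]

theorem extF_fst (p : (Fin n → Bool) × Bool) : (extF p).1 = twistF p.1 := by
  simp only [extF, dif_pos (NeZero.pos n)]; split <;> rfl

theorem extF_of_shiftL_head {s : Fin n → Bool} (hs : s 0 = true) (h : shiftL s 0 = true)
    (b : Bool) :
    extF (s, b) = (shiftL s, b) := by
  simp [extF, dif_pos (NeZero.pos n), twistF_of_shiftL_head h, shiftL_last, hs]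

theorem extF_of_shiftL_head_false {s : Fin n → Bool} (hs : s 0 = true) (h : shiftL s 0 = false)
    (b : Bool) :
    extF (s, b) = (inv (shiftL s), !b) := by
  simp [extF, dif_pos (NeZero.pos n), twistF_of_shiftL_head_false h, shiftL_last, hs, inv]

theorem toLex_twistF_lt_twistF {u v : Fin n → Bool} (hu : u 0 = true) (h1 : shiftL u 0 = true)
    (h : toLex u < toLex v) : toLex (twistF u) < toLex (twistF v) := by
  have hv := head_eq_true_of_le hu h.le
  have hshift := toLex_shiftL_lt_shiftL (hu.trans hv.symm) h
  rw [twistF_of_shiftL_head h1, twistF_of_shiftL_head (head_eq_true_of_le h1 hshift.le)]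
  exact hshift

theorem toLex_twistF_lt_twistF_of_shiftL_head_false {u v : Fin n → Bool} (hu : u 0 = true)
    (h1 : shiftL v 0 = false) (h : toLex u < toLex v) : toLex (twistF v) < toLex (twistF u) := by
  have hv := head_eq_true_of_le hu h.le
  have hshift := toLex_shiftL_lt_shiftL (hu.trans hv.symm) h
  have h1u : shiftL u 0 = false :=
    le_bot_iff.1 (show shiftL u 0 ≤ false from h1 ▸ head_le_head hshift.le)
  rw [twistF_of_shiftL_head_false h1, twistF_of_shiftL_head_false h1u]
  exact toLex_inv_lt_inv hshift

theorem extToLex_extF_lt_extF {p q : (Fin n → Bool) × Bool} (hp : p.1 0 = true)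
    (h1 : shiftL p.1 0 = true) (h : extToLex p < extToLex q) :
    extToLex (extF p) < extToLex (extF q) := by
  obtain ⟨s, b⟩ := p
  obtain ⟨s', b'⟩ := q
  have h' : toLex s < toLex s' ∨ s = s' ∧ b < b' := Prod.Lex.toLex_lt_toLex.1 h
  rcases h' with h | ⟨rfl, hb⟩
  · refine Prod.Lex.toLex_lt_toLex.2 (Or.inl ?_)
    rw [extF_fst, extF_fst]
    exact toLex_twistF_lt_twistF hp h1 h
  · rw [extF_of_shiftL_head hp h1, extF_of_shiftL_head hp h1]
    exact Prod.Lex.toLex_lt_toLex.2 (Or.inr ⟨rfl, hb⟩)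

theorem extToLex_extF_lt_extF_of_shiftL_head_false {p q : (Fin n → Bool) × Bool}
    (hp : p.1 0 = true) (h1 : shiftL q.1 0 = false) (h : extToLex p < extToLex q) :
    extToLex (extF q) < extToLex (extF p) := by
  obtain ⟨s, b⟩ := p
  obtain ⟨s', b'⟩ := q
  have h' : toLex s < toLex s' ∨ s = s' ∧ b < b' := Prod.Lex.toLex_lt_toLex.1 h
  rcases h' with h | ⟨rfl, hb⟩
  · refine Prod.Lex.toLex_lt_toLex.2 (Or.inl ?_)
    rw [extF_fst, extF_fst]
    exact toLex_twistF_lt_twistF_of_shiftL_head_false hp h1 h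
  · rw [extF_of_shiftL_head_false hp h1, extF_of_shiftL_head_false hp h1]
    refine Prod.Lex.toLex_lt_toLex.2 (Or.inr ⟨rfl, show (!b') < (!b) from ?_⟩)
    revert hb; cases b <;> cases b' <;> decide

end TwistedShift

theorem iterate_val_finSucc {α : Type*} {f : α → α} {x : α} (h : f^[n] x = x) (a : Fin n) :
    f^[(finSucc a).val] x = f (f^[a.val] x) := by
  rw [← iterate_succ_apply' f a.val x]
  rcases (Nat.add_one_le_of_lt a.isLt).lt_or_eq with hlt | heq
  · exact congrArg (f^[·] x) (Nat.mod_eq_of_lt hlt)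
  · change f^[(a.val + 1) % n] x = f^[a.val + 1] x
    rw [heq, Nat.mod_self, h]; rfl

def untwist (p : (Fin n → Bool) × Bool) : Fin n → Bool := if p.2 then inv p.1 else p.1

section Orbit

variable [NeZero n] {t : Fin n → Bool}

theorem untwist_extF {p : (Fin n → Bool) × Bool} (hp : p.1 0 = true) :
    untwist (extF p) = shiftL (untwist p) := by
  obtain ⟨s, b⟩ := p
  cases h : shiftL s 0
  · rw [extF_of_shiftL_head_false hp h]
    cases b <;> simp [untwist, inv_involutive _, shiftL_inv]
  · rw [extF_of_shiftL_head hp h]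
    cases b <;> simp [untwist, shiftL_inv]

theorem iterate_twistF_head (ht : t 0 = true) (k : ℕ) : (twistF^[k] t) 0 = true := by
  cases k with
  | zero => exact ht
  | succ k => rw [iterate_succ_apply']; exact twistF_head _

theorem iterate_extF_fst (p : (Fin n → Bool) × Bool) (k : ℕ) :
    (extF^[k] p).1 = twistF^[k] p.1 :=
  Semiconj.iterate_right extF_fst k p

theorem untwist_iterate_extF (ht : t 0 = true) (k : ℕ) :
    untwist (extF^[k] (t, false)) = shiftL^[k] t := by
  induction k with
  | zero => rfl
  | succ k ih =>
    have hhead : (extF^[k] (t, false)).1 0 = true := by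
      rw [iterate_extF_fst]; exact iterate_twistF_head ht k
    rw [iterate_succ_apply', iterate_succ_apply', untwist_extF hhead, ih]

theorem iterate_twistF_eq_or (ht : t 0 = true) (k : ℕ) :
    twistF^[k] t = shiftL^[k] t ∨ twistF^[k] t = inv (shiftL^[k] t) := by
  rw [← untwist_iterate_extF ht k, ← iterate_extF_fst (t, false) k]
  unfold untwist
  cases (extF^[k] (t, false)).2 <;> simp [inv_involutive _]

theorem iterate_twistF_card (ht : t 0 = true) : twistF^[n] t = t := by
  rcases iterate_twistF_eq_or ht n with h | h <;> rw [shiftL_iterate_card] at h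
  · exact h
  · have := iterate_twistF_head ht n
    simp [h, inv, ht] at this

theorem iterate_extF_card (ht : t 0 = true) : extF^[n] (t, false) = (t, false) := by
  have hfst : (extF^[n] (t, false)).1 = t := (iterate_extF_fst _ n).trans (iterate_twistF_card ht)
  have huntwist := untwist_iterate_extF ht n
  rw [shiftL_iterate_card] at huntwist
  refine Prod.ext hfst ?_
  cases hb : (extF^[n] (t, false)).2
  · rfl
  · simp only [untwist, hb, if_true, hfst] at huntwist
    simpa [inv, ht] using congrFun huntwist 0

theorem injective_iterate_twistF (hprim : Primitive t) (ht : t 0 = true)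
    (hnr : ¬ ReflexiveStr t) : Injective fun i : Fin n => twistF^[i.val] t := by
  intro a b h
  apply hprim.injective_shiftL_iterate
  simp only at h ⊢
  rcases iterate_twistF_eq_or ht a with ha | ha <;>
    rcases iterate_twistF_eq_or ht b with hb | hb <;> rw [ha, hb] at h
  · exact h
  · exact absurd (reflexiveStr_of_shiftL_iterate_eq_inv b.isLt.le h) hnr
  · exact absurd (reflexiveStr_of_shiftL_iterate_eq_inv a.isLt.le h.symm) hnr
  · exact inv_involutive.injective h

theorem injective_iterate_extF (hprim : Primitive t) (ht : t 0 = true) :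
    Injective fun i : Fin n => extF^[i.val] (t, false) := fun a b h =>
  hprim.injective_shiftL_iterate <| by
    simpa only [untwist_iterate_extF ht] using congrArg untwist h

end Orbit

section Rank

variable {X : Type*} [LinearOrder X] (μ : Fin n → X)

theorem rankOf_lt_rankOf_iff {a b : Fin n} :
    rankOf (· < ·) μ a < rankOf (· < ·) μ b ↔ μ a < μ b := by
  constructor
  · intro h
    by_contra hba
    refine h.not_ge (card_le_card fun j hj => ?_)
    simp only [mem_filter, mem_univ, true_and] at hj ⊢
    exact hj.trans_le (not_lt.1 hba)
  · intro h
    refine card_lt_card ⟨fun j hj => ?_, fun hsub => ?_⟩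
    · simp only [mem_filter, mem_univ, true_and] at hj ⊢
      exact hj.trans h
    · have := hsub (by simpa using h)
      simp at this

theorem rankOf_lt_card (i : Fin n) : rankOf (· < ·) μ i < n := by
  unfold rankOf
  exact (card_lt_univ_of_notMem (x := i) (by simp)).trans_eq (Fintype.card_fin n)

noncomputable def rankFin (i : Fin n) : Fin n := ⟨rankOf (· < ·) μ i, rankOf_lt_card μ i⟩

theorem rankFin_lt_rankFin_iff {a b : Fin n} : rankFin μ a < rankFin μ b ↔ μ a < μ b :=
  rankOf_lt_rankOf_iff μ

theorem rankFin_bijective (hμ : Injective μ) : Bijective (rankFin μ) := by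
  have hinj : Injective (rankFin μ) := fun a b h => hμ <| le_antisymm
    (not_lt.1 fun hlt => ((rankFin_lt_rankFin_iff μ).2 hlt).ne' h)
    (not_lt.1 fun hlt => ((rankFin_lt_rankFin_iff μ).2 hlt).ne h)
  exact ⟨hinj, Finite.surjective_of_injective hinj⟩

theorem BuiltFrom.apply_rankFin {σ : Equiv.Perm (Fin n)} (hσ : BuiltFrom (· < ·) μ σ)
    (a : Fin n) : σ (rankFin μ a) = rankFin μ (finSucc a) :=
  Fin.ext (hσ a _ rfl)

end Rank

section Perm

variable [NeZero n] {σ : Equiv.Perm (Fin n)}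

open Fin.NatCast

theorem isCyclicPerm_of_apply_eq {r : Fin n → Fin n} (hr : Surjective r)
    (h : ∀ a, σ (r a) = r (finSucc a)) : IsCyclicPerm σ := by
  have hpow : ∀ (k : ℕ) a, (σ ^ k) (r a) = r (a + k) := by
    intro k
    induction k with
    | zero => simp
    | succ k ih =>
      intro a
      rw [pow_succ', Equiv.Perm.mul_apply, ih, h, finSucc_eq_add_one, Nat.cast_succ, add_assoc]
  intro x y
  obtain ⟨a, rfl⟩ := hr x
  obtain ⟨b, rfl⟩ := hr y
  exact ⟨(b - a).val, by rw [hpow, Fin.cast_val_eq_self, add_sub_cancel]⟩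

theorem isUnimodal_of_lt (P : Fin n → Prop) (hinc : ∀ i j, i < j → P i → σ i < σ j)
    (hdec : ∀ i j, i < j → ¬ P j → σ j < σ i) : IsUnimodal σ := by
  have hmin : ∀ i, σ (σ.symm 0) ≤ σ i := fun i => by simp
  refine ⟨σ.symm 0, fun i j hij hjm => ?_, fun i j hmi hij => ?_⟩
  · rcases hij.lt_or_eq with hij | rfl
    · by_cases hP : P j
      · rcases hjm.lt_or_eq with hjm | rfl
        · exact absurd (hinc _ _ hjm hP) (not_lt.2 (hmin j))
        · exact hmin i
      · exact (hdec _ _ hij hP).le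
    · exact le_rfl
  · rcases hij.lt_or_eq with hij | rfl
    · by_cases hP : P i
      · exact (hinc _ _ hij hP).le
      · rcases hmi.lt_or_eq with hmi | rfl
        · exact absurd (hdec _ _ hmi hP) (not_lt.2 (hmin i))
        · exact hmin j
    · exact le_rfl

theorem BuiltFrom.cupPerm {X : Type*} [LinearOrder X] {μ : Fin n → X}
    (hσ : BuiltFrom (· < ·) μ σ) (hμ : Injective μ) (P : X → Prop)
    (hinc : ∀ a b, μ a < μ b → P (μ a) → μ (finSucc a) < μ (finSucc b))
    (hdec : ∀ a b, μ a < μ b → ¬ P (μ b) → μ (finSucc b) < μ (finSucc a)) :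
    CUPperm σ := by
  have hr := rankFin_bijective μ hμ
  have hstep := hσ.apply_rankFin
  let e := Equiv.ofBijective _ hr
  refine ⟨isCyclicPerm_of_apply_eq hr.2 hstep,
    isUnimodal_of_lt (fun i => P (μ (e.symm i))) (fun i j hij hP => ?_) (fun i j hij hP => ?_)⟩
  all_goals
    obtain ⟨a, rfl⟩ := hr.2 i
    obtain ⟨b, rfl⟩ := hr.2 j
    rw [rankFin_lt_rankFin_iff] at hij
    simp only [e, Equiv.ofBijective_symm_apply_apply] at hP
    rw [hstep, hstep, rankFin_lt_rankFin_iff]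
  · exact hinc a b hij hP
  · exact hdec a b hij hP

end Perm

section Main

variable [NeZero n] {t : Fin n → Bool}

theorem cupPerm_of_builtFrom_iterate_twistF (ht : t 0 = true)
    (hinj : Injective fun i : Fin n => twistF^[i.val] t) {σ : Equiv.Perm (Fin n)}
    (hσ : BuiltFrom strLt (fun i : Fin n => twistF^[i.val] t) σ) : CUPperm σ := by
  refine BuiltFrom.cupPerm (μ := fun i : Fin n => toLex (twistF^[i.val] t)) hσ hinj
    (fun u => shiftL (ofLex u) 0 = true) (fun a b hab h1 => ?_) (fun a b hab h1 => ?_)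
  all_goals simp only [iterate_val_finSucc (iterate_twistF_card ht)]
  · exact toLex_twistF_lt_twistF (iterate_twistF_head ht a) h1 hab
  · exact toLex_twistF_lt_twistF_of_shiftL_head_false (iterate_twistF_head ht a)
      (Bool.eq_false_iff.2 h1) hab

theorem cupPerm_of_builtFrom_iterate_extF (ht : t 0 = true)
    (hinj : Injective fun i : Fin n => extF^[i.val] (t, false)) {σ : Equiv.Perm (Fin n)}
    (hσ : BuiltFrom extLt (fun i : Fin n => extF^[i.val] (t, false)) σ) : CUPperm σ := by
  rw [extLt_eq] at hσ
  have hhead (a : Fin n) : (extF^[a.val] (t, false)).1 0 = true := by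
    rw [iterate_extF_fst]; exact iterate_twistF_head ht a
  refine BuiltFrom.cupPerm (μ := fun i : Fin n => extToLex (extF^[i.val] (t, false))) hσ
    (fun a b h => hinj h) (fun p => shiftL (ofLex (ofLex p).1) 0 = true)
    (fun a b hab h1 => ?_) (fun a b hab h1 => ?_)
  all_goals simp only [iterate_val_finSucc (iterate_extF_card ht)]
  · exact extToLex_extF_lt_extF (hhead a) h1 hab
  · exact extToLex_extF_lt_extF_of_shiftL_head_false (hhead a) (Bool.eq_false_iff.2 h1) hab

end Main

/-- Let `t ∈ {0,1}ⁿ` be primitive and begin with 1. In the non-reflexive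
case set `μᵢ = F^{i−1}(t)`, in the reflexive case set `μᵢ = F̃^{i−1}(t^−)`. Then the `μᵢ`
are pairwise distinct, and the permutation `σ` defined by `σ(rᵢ) = r_{i+1}` (where `rᵢ` is
the lexicographic rank of `μᵢ`) is a cyclic unimodal permutation. -/
theorem built_perm_is_CUP (n : ℕ) [NeZero n] (t : Fin n → Bool)
    (hprim : Primitive t) (h1 : t 0 = true) :
    (¬ ReflexiveStr t →
      Function.Injective (fun i : Fin n => twistF^[i.val] t) ∧
      ∀ σ : Equiv.Perm (Fin n),
        BuiltFrom strLt (fun i : Fin n => twistF^[i.val] t) σ → CUPperm σ) ∧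
    (ReflexiveStr t →
      Function.Injective (fun i : Fin n => extF^[i.val] (t, false)) ∧
      ∀ σ : Equiv.Perm (Fin n),
        BuiltFrom extLt (fun i : Fin n => extF^[i.val] (t, false)) σ → CUPperm σ) :=
  ⟨fun hnr => ⟨injective_iterate_twistF hprim h1 hnr,
      fun _ => cupPerm_of_builtFrom_iterate_twistF h1 (injective_iterate_twistF hprim h1 hnr)⟩,
    fun _ => ⟨injective_iterate_extF hprim h1,
      fun _ => cupPerm_of_builtFrom_iterate_extF h1 (injective_iterate_extF hprim h1)⟩⟩

end Necklaces
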